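/- arXiv:1412.6168 — 3 statements merged into one kernel-verified Lean document; each statement's English description precedes it below -/
import Mathlib

section
/- For real numbers a, b, c, d with c ≤ d, the integral ∫_c^d |a + b·h| dh is at least (√2 − 1)(d − c)·max{|a + b·c|, |a + b·d|}. -/
/-!
Where `h ↦ a + b * h` keeps its sign on `[x, y]`, the integral of its absolute value is at least
the absolute value of its integral, which is the trapezoid value
`(y - x) (|a + b x| + |a + b y|) / 2`. If the sign changes at a root `r ∈ [c, d]`, the two
triangles on `[c, r]` and `[r, d]` give `|b| (u² + v²) / 2` with `u = r - c`, `v = d - r`, and the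
claim reduces to `(√2 - 1) (u + v) max u v ≤ (u² + v²) / 2`, with equality at `v = (√2 - 1) u`.
-/

open Real Set

lemma integral_affine (a b x y : ℝ) :
    ∫ h in x..y, (a + b * h) = (y - x) * ((a + b * x) + (a + b * y)) / 2 := by
  rw [intervalIntegral.integral_add intervalIntegrable_const
      (intervalIntegral.intervalIntegrable_id.const_mul b), intervalIntegral.integral_const,
    intervalIntegral.integral_const_mul, integral_id, smul_eq_mul]
  ring

lemma trapezoid_le_integral_abs_affine {a b x y : ℝ} (hxy : x ≤ y)
    (hsign : 0 ≤ (a + b * x) * (a + b * y)) :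
    (y - x) * (|a + b * x| + |a + b * y|) / 2 ≤ ∫ h in x..y, |a + b * h| :=
  calc (y - x) * (|a + b * x| + |a + b * y|) / 2
      = |∫ h in x..y, (a + b * h)| := by
        rw [integral_affine, ← (abs_add_eq_add_abs_iff _ _).2 (mul_nonneg_iff.1 hsign), abs_div,
          abs_mul, abs_of_nonneg (sub_nonneg.2 hxy), abs_two]
    _ ≤ ∫ h in x..y, |a + b * h| := intervalIntegral.abs_integral_le_integral_abs hxy

lemma mul_max_abs_div_two_le_integral_abs_affine {a b x y : ℝ} (hxy : x ≤ y)
    (hsign : 0 ≤ (a + b * x) * (a + b * y)) :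
    (y - x) * max |a + b * x| |a + b * y| / 2 ≤ ∫ h in x..y, |a + b * h| := by
  refine le_trans ?_ (trapezoid_le_integral_abs_affine hxy hsign)
  gcongr
  exact max_le_add_of_nonneg (abs_nonneg _) (abs_nonneg _)

lemma exists_mem_uIcc_eq_zero_of_mul_nonpos {f : ℝ → ℝ} {x y : ℝ} (hf : ContinuousOn f (uIcc x y))
    (hsign : f x * f y ≤ 0) : ∃ r ∈ uIcc x y, f r = 0 := by
  refine intermediate_value_uIcc hf (mem_uIcc.2 ?_)
  rcases mul_nonpos_iff.1 hsign with h | h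
  exacts [.inr h.symm, .inl h]

lemma sqrt_two_sub_one_mul_add_mul_max_le (u v : ℝ) :
    (√2 - 1) * (u + v) * max u v ≤ (u ^ 2 + v ^ 2) / 2 := by
  have hsq : √2 ^ 2 = 2 := sq_sqrt zero_le_two
  rcases max_cases u v with ⟨hmax, -⟩ | ⟨hmax, -⟩ <;> rw [hmax]
  · nlinarith [sq_nonneg ((√2 - 1) * u - v)]
  · nlinarith [sq_nonneg ((√2 - 1) * v - u)]

lemma sqrt_two_sub_one_mul_max_abs_le_integral_abs_affine_of_root {a b c d r : ℝ} (hcr : c ≤ r)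
    (hrd : r ≤ d) (hroot : a + b * r = 0) :
    (√2 - 1) * (d - c) * max |a + b * c| |a + b * d| ≤ ∫ h in c..d, |a + b * h| := by
  have hc : |a + b * c| = |b| * (r - c) := by
    rw [show a + b * c = b * (c - r) by linear_combination hroot, abs_mul, abs_sub_comm,
      abs_of_nonneg (sub_nonneg.2 hcr)]
  have hd : |a + b * d| = |b| * (d - r) := by
    rw [show a + b * d = b * (d - r) by linear_combination hroot, abs_mul,
      abs_of_nonneg (sub_nonneg.2 hrd)]
  have hcont : Continuous fun h ↦ |a + b * h| := by fun_prop
  calc (√2 - 1) * (d - c) * max |a + b * c| |a + b * d|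
      = |b| * ((√2 - 1) * ((r - c) + (d - r)) * max (r - c) (d - r)) := by
        rw [hc, hd, ← mul_max_of_nonneg _ _ (abs_nonneg b)]; ring
    _ ≤ |b| * (((r - c) ^ 2 + (d - r) ^ 2) / 2) := by
        gcongr; exact sqrt_two_sub_one_mul_add_mul_max_le _ _
    _ = (r - c) * (|a + b * c| + |a + b * r|) / 2
          + (d - r) * (|a + b * r| + |a + b * d|) / 2 := by
        rw [hroot, hc, hd, abs_zero]; ring
    _ ≤ (∫ h in c..r, |a + b * h|) + ∫ h in r..d, |a + b * h| := by
        gcongr <;> apply trapezoid_le_integral_abs_affine <;> simp [hcr, hrd, hroot]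
    _ = ∫ h in c..d, |a + b * h| :=
        intervalIntegral.integral_add_adjacent_intervals
          (hcont.intervalIntegrable c r) (hcont.intervalIntegrable r d)

theorem integral_abs_affine_ge (a b c d : ℝ) (hcd : c ≤ d) :
    (Real.sqrt 2 - 1) * (d - c) * max |a + b * c| |a + b * d| ≤
      ∫ h in c..d, |a + b * h| := by
  rcases le_or_gt 0 ((a + b * c) * (a + b * d)) with hsign | hsign
  · have hsqrt : √2 - 1 ≤ 1 / 2 := by nlinarith [sq_sqrt (zero_le_two (α := ℝ)), sqrt_nonneg 2]
    calc (√2 - 1) * (d - c) * max |a + b * c| |a + b * d|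
        ≤ 1 / 2 * (d - c) * max |a + b * c| |a + b * d| := by gcongr
      _ = (d - c) * max |a + b * c| |a + b * d| / 2 := by ring
      _ ≤ _ := mul_max_abs_div_two_le_integral_abs_affine hcd hsign
  · obtain ⟨r, hr, hroot⟩ := exists_mem_uIcc_eq_zero_of_mul_nonpos (f := fun h ↦ a + b * h)
      (by fun_prop) hsign.le
    rw [uIcc_of_le hcd] at hr
    exact sqrt_two_sub_one_mul_max_abs_le_integral_abs_affine_of_root hr.1 hr.2 hroot
end

section
/- Let K' ⊆ ℝⁿ be a convex body containing the segment [0, 2s·eₙ] with every horizontal slice K'_a = K' ∩ {xₙ = a} empty for a ∉ [0, 2s]. Then vol_n(K') ≥ (2s/n)·vol_{n−1}(K'_0). -/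
/-!
By convexity, the slice at height `a ∈ [0, h]` contains the bottom slice scaled by `1 - a / h`
towards the apex `(0, h)`, so its volume is at least `(1 - a / h) ^ (n - 1)` times that of the
bottom slice. Integrating over `a` gives the factor `∫₀ʰ (1 - a / h) ^ (n - 1) da = h / n`.
-/

open MeasureTheory Set Module Pointwise

theorem MeasureTheory.Measure.lintegral_le_prod_apply_symm {α β : Type*} [MeasurableSpace α]
    [MeasurableSpace β] (μ : Measure α) (ν : Measure β) [SFinite μ] [SFinite ν]
    (s : Set (α × β)) :
    ∫⁻ y, μ ((fun x => (x, y)) ⁻¹' s) ∂ν ≤ μ.prod ν s := by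
  rw [← measure_toMeasurable s, prod_apply_symm (measurableSet_toMeasurable _ _)]
  exact lintegral_mono fun y => measure_mono (preimage_mono (subset_toMeasurable _ _))

theorem Convex.smul_slice_zero_subset {E F : Type*} [AddCommGroup E] [Module ℝ E]
    [AddCommGroup F] [Module ℝ F] {K : Set (E × F)} (hK : Convex ℝ K) {b : F}
    (hb : ((0 : E), b) ∈ K) {t : ℝ} (ht₀ : 0 ≤ t) (ht₁ : t ≤ 1) :
    (1 - t) • {x | (x, (0 : F)) ∈ K} ⊆ {x | (x, t • b) ∈ K} := by
  rintro _ ⟨x, hx, rfl⟩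
  simpa using hK hx hb (sub_nonneg.2 ht₁) ht₀ (sub_add_cancel 1 t)

theorem integral_one_sub_div_pow {h : ℝ} (hh : h ≠ 0) (n : ℕ) :
    ∫ a in (0 : ℝ)..h, (1 - a / h) ^ n = h / (n + 1) := by
  rw [intervalIntegral.integral_comp_div (fun u => (1 - u) ^ n) hh]
  simp [div_self hh, intervalIntegral.integral_comp_sub_left (fun u => u ^ n)]
  field_simp

theorem lintegral_Ioc_ofReal_one_sub_div_pow {h : ℝ} (hh : 0 < h) (n : ℕ) :
    ∫⁻ a in Ioc 0 h, ENNReal.ofReal ((1 - a / h) ^ n) = ENNReal.ofReal (h / (n + 1)) := by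
  rw [← ofReal_integral_eq_lintegral_ofReal, ← intervalIntegral.integral_of_le hh.le,
    integral_one_sub_div_pow hh.ne']
  · exact (by fun_prop : Continuous fun a : ℝ => (1 - a / h) ^ n).integrableOn_Icc.mono_set
      Ioc_subset_Icc_self
  · filter_upwards [ae_restrict_mem measurableSet_Ioc] with a ha
    exact pow_nonneg (sub_nonneg.2 ((div_le_one hh).2 ha.2)) n

theorem Convex.ofReal_div_mul_volume_slice_zero_le_volume {E : Type*} [NormedAddCommGroup E]
    [NormedSpace ℝ E] [FiniteDimensional ℝ E] [MeasureSpace E] [BorelSpace E]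
    [(volume : Measure E).IsAddHaarMeasure] {K : Set (E × ℝ)} (hK : Convex ℝ K) {h : ℝ}
    (hh : 0 < h) (hapex : ((0 : E), h) ∈ K) :
    ENNReal.ofReal (h / (finrank ℝ E + 1)) * volume {x | (x, (0 : ℝ)) ∈ K} ≤ volume K := by
  set n := finrank ℝ E
  have hslice : ∀ a ∈ Ioc 0 h, ENNReal.ofReal ((1 - a / h) ^ n) * volume {x | (x, (0 : ℝ)) ∈ K}
      ≤ volume {x | (x, a) ∈ K} := by
    rintro a ⟨ha₀, ha₁⟩
    have ht₀ : 0 ≤ a / h := div_nonneg ha₀.le hh.le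
    have ht₁ : a / h ≤ 1 := (div_le_one hh).2 ha₁
    calc _ = volume ((1 - a / h) • {x | (x, (0 : ℝ)) ∈ K}) := by
          rw [Measure.addHaar_smul, abs_of_nonneg (pow_nonneg (sub_nonneg.2 ht₁) n)]
      _ ≤ volume {x | (x, (a / h) • h) ∈ K} :=
          measure_mono (hK.smul_slice_zero_subset hapex ht₀ ht₁)
      _ = _ := by rw [smul_eq_mul, div_mul_cancel₀ a hh.ne']
  calc ENNReal.ofReal (h / (n + 1)) * volume {x | (x, (0 : ℝ)) ∈ K}
      = ∫⁻ a in Ioc 0 h, ENNReal.ofReal ((1 - a / h) ^ n) * volume {x | (x, (0 : ℝ)) ∈ K} := by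
        rw [lintegral_mul_const _ (by fun_prop), lintegral_Ioc_ofReal_one_sub_div_pow hh]
    _ ≤ ∫⁻ a in Ioc 0 h, volume {x | (x, a) ∈ K} := setLIntegral_mono' measurableSet_Ioc hslice
    _ ≤ ∫⁻ a, volume {x | (x, a) ∈ K} := setLIntegral_le_lintegral _ _
    _ ≤ volume K := by
        rw [Measure.volume_eq_prod]
        exact Measure.lintegral_le_prod_apply_symm _ _ K

theorem volume_ge_of_slices_general
    (m : ℕ) (s : ℝ) (hs : 0 < s) (K' : Set (EuclideanSpace ℝ (Fin m) × ℝ))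
    (hconv : Convex ℝ K')
    (hseg : segment ℝ (0 : EuclideanSpace ℝ (Fin m) × ℝ)
      ((0 : EuclideanSpace ℝ (Fin m)), 2 * s) ⊆ K') :
    ENNReal.ofReal (2 * s / (m + 1)) * volume {x : EuclideanSpace ℝ (Fin m) | (x, 0) ∈ K'}
      ≤ volume K' := by
  have hapex : ((0 : EuclideanSpace ℝ (Fin m)), 2 * s) ∈ K' := hseg (right_mem_segment ℝ _ _)
  have hvol := hconv.ofReal_div_mul_volume_slice_zero_le_volume (by positivity) hapex
  rwa [finrank_euclideanSpace_fin] at hvol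

/-- If a convex body `K' ⊆ ℝ^(n-1) × ℝ` (with `n = m + 1`) contains the segment
`[0, 2s·eₙ]` and all its horizontal slices at heights outside `[0, 2s]` are empty, then
`vol_n(K') ≥ (2s/n) · vol_{n-1}(K'_0)`. -/
theorem volume_ge_of_slices
    (m : ℕ) (s : ℝ) (hs : 0 < s) (K' : Set (EuclideanSpace ℝ (Fin m) × ℝ))
    (hconv : Convex ℝ K') (hcomp : IsCompact K') (hint : (interior K').Nonempty)
    (hseg : segment ℝ (0 : EuclideanSpace ℝ (Fin m) × ℝ)
      ((0 : EuclideanSpace ℝ (Fin m)), 2 * s) ⊆ K')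
    (hslice : ∀ a : ℝ, a ∉ Set.Icc 0 (2 * s) → {x : EuclideanSpace ℝ (Fin m) | (x, a) ∈ K'} = ∅) :
    ENNReal.ofReal (2 * s / (m + 1)) * volume {x : EuclideanSpace ℝ (Fin m) | (x, 0) ∈ K'}
      ≤ volume K' :=
  volume_ge_of_slices_general m s hs K' hconv hseg
end

section
/- Let L be a full-rank lattice in ℝⁿ and let VR denote its Voronoi relevant vectors. Then every v ∈ VR satisfies ‖v‖₂ ≤ 2μ(L), and max_{v ∈ VR} ‖v‖₂ ≥ 2μ(L)/√n. -/
/-!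
For a relevant `v` and any `y ∈ L`, minimality of `v` in `v + 2L` gives
`‖v‖ ≤ ‖v - 2y‖ = 2‖v/2 - y‖`, hence `‖v‖ ≤ 2 dist(v/2, L) ≤ 2μ`.

Conversely, the relevant vectors span `ℝⁿ`: a shortest lattice vector `x` outside their span is
not relevant, so some `u ≠ ±x` in `x + 2L` has `‖u‖ ≤ ‖x‖`, and `x = (x + u)/2 + (x - u)/2`
splits `x` into two lattice vectors which are strictly shorter by strict convexity, hence lie in
the span. Rounding against `n` independent relevant vectors `vᵢ` (Babai's nearest plane method)
brings every point within `½√(Σ‖vᵢ‖²) ≤ (√n/2) maxᵢ‖vᵢ‖` of `L`.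
-/

open Metric Module

section NearestPlane

variable {E : Type*} [NormedAddCommGroup E] [InnerProductSpace ℝ E]

lemma norm_add_sq_of_mem_orthogonal {V : Submodule ℝ E} {u w : E} (hu : u ∈ V) (hw : w ∈ Vᗮ) :
    ‖u + w‖ ^ 2 = ‖u‖ ^ 2 + ‖w‖ ^ 2 := by
  simpa only [sq] using
    norm_add_sq_eq_norm_sq_add_norm_sq_real (V.inner_right_of_mem_orthogonal hu hw)

/-- Babai's nearest plane rounding: for `t = r • a + v` with `v` in the span `V` of the other
vectors, subtract `round r • a` and recurse on the part of the remainder lying in `V`; the part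
orthogonal to `V` is `(r - round r) • (a - proj_V a)`, of norm at most `‖a‖ / 2`. -/
lemma exists_mem_span_int_norm_sub_sq_le (S : Finset E) {t : E}
    (ht : t ∈ Submodule.span ℝ (S : Set E)) :
    ∃ y ∈ Submodule.span ℤ (S : Set E), ‖t - y‖ ^ 2 ≤ (∑ v ∈ S, ‖v‖ ^ 2) / 4 := by
  classical
  induction S using Finset.induction_on generalizing t with
  | empty =>
    rw [Finset.coe_empty, Submodule.span_empty, Submodule.mem_bot] at ht
    exact ⟨0, zero_mem _, by simp [ht]⟩
  | insert a S haS ih =>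
    rw [Finset.coe_insert, Submodule.mem_span_insert] at ht
    obtain ⟨r, v, hv, rfl⟩ := ht
    set V := Submodule.span ℝ (S : Set E)
    set p := V.starProjection a
    have hp : p ∈ V := V.starProjection_apply_mem a
    have hg : a - p ∈ Vᗮ := V.sub_starProjection_mem_orthogonal a
    set m : ℤ := round r
    obtain ⟨y, hy, hqy⟩ := ih (t := v + (r - m) • p) (V.add_mem hv (V.smul_mem _ hp))
    have hyV : y ∈ V := Submodule.span_le_restrictScalars ℤ ℝ (S : Set E) hy
    refine ⟨y + m • a, ?_, ?_⟩
    · rw [Finset.coe_insert]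
      exact add_mem (Submodule.span_mono (Set.subset_insert _ _) hy)
        (Submodule.smul_mem _ _ (Submodule.subset_span (Set.mem_insert _ _)))
    have hsplit : r • a + v - (y + m • a) = (v + (r - m) • p - y) + (r - m) • (a - p) := by
      rw [← Int.cast_smul_eq_zsmul ℝ]
      module
    have hround : (r - m) ^ 2 ≤ 1 / 4 := by
      rw [← sq_abs]
      nlinarith [abs_sub_round r, abs_nonneg (r - m)]
    have hga : ‖a - p‖ ^ 2 ≤ ‖a‖ ^ 2 := by
      have := norm_add_sq_of_mem_orthogonal hp hg
      rw [add_sub_cancel] at this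
      nlinarith [sq_nonneg ‖p‖]
    rw [hsplit, norm_add_sq_of_mem_orthogonal
      (V.sub_mem (V.add_mem hv (V.smul_mem _ hp)) hyV) (Vᗮ.smul_mem _ hg),
      norm_smul, mul_pow, Real.norm_eq_abs, sq_abs, Finset.sum_insert haS]
    nlinarith [sq_nonneg (r - m), sq_nonneg ‖a - p‖]

lemma infDist_le_sqrt_sum_norm_sq_div_two {L : Submodule ℤ E} {S : Finset E}
    (hSL : (S : Set E) ⊆ L) (hS : Submodule.span ℝ (S : Set E) = ⊤) (t : E) :
    infDist t L ≤ √(∑ v ∈ S, ‖v‖ ^ 2) / 2 := by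
  obtain ⟨y, hy, hty⟩ := exists_mem_span_int_norm_sub_sq_le S (hS ▸ Submodule.mem_top : t ∈ _)
  have hyL : y ∈ L := Submodule.span_le.mpr hSL hy
  have hsum : 0 ≤ ∑ v ∈ S, ‖v‖ ^ 2 := by positivity
  calc infDist t L ≤ ‖t - y‖ := dist_eq_norm t y ▸ infDist_le_dist_of_mem hyL
    _ ≤ √(∑ v ∈ S, ‖v‖ ^ 2) / 2 := by
      rw [le_div_iff₀ two_pos, Real.le_sqrt (by positivity) hsum]
      linarith

end NearestPlane

lemma sInf_setOf_norm_sub_eq_infDist {E : Type*} [SeminormedAddCommGroup E] (s : Set E) (t : E) :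
    sInf {r | ∃ y ∈ s, ‖t - y‖ = r} = infDist t s := by
  rw [infDist_eq_iInf, ← sInf_image']
  simp only [dist_eq_norm]
  rfl

lemma Submodule.finite_inter_closedBall {E : Type*} [NormedAddCommGroup E] [ProperSpace E]
    (L : Submodule ℤ E) [DiscreteTopology L] (R : ℝ) : ((L : Set E) ∩ closedBall 0 R).Finite := by
  rw [Set.inter_comm]
  refine finite_isBounded_inter_isClosed DiscreteTopology.isDiscrete isBounded_closedBall ?_
  have : DiscreteTopology L.toAddSubgroup := ‹DiscreteTopology L›
  exact AddSubgroup.isClosed_of_discrete (H := L.toAddSubgroup)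

section VoronoiRelevant

variable {E : Type*} [NormedAddCommGroup E] [NormedSpace ℝ E] {L : Submodule ℤ E}

def voronoiRelevant (L : Submodule ℤ E) : Set E :=
  {v | v ∈ L ∧ v ≠ 0 ∧
    ∀ z, (∃ w ∈ L, z = v + (2 : ℝ) • w) → z ≠ v → z ≠ -v → ‖v‖ < ‖z‖}

lemma voronoiRelevant_subset : voronoiRelevant L ⊆ L := fun _ hv => hv.1

lemma norm_le_norm_add_two_smul_of_mem_voronoiRelevant {v y : E} (hv : v ∈ voronoiRelevant L)
    (hy : y ∈ L) : ‖v‖ ≤ ‖v + (2 : ℝ) • y‖ := by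
  by_cases hz : v + (2 : ℝ) • y = v
  · rw [hz]
  by_cases hz' : v + (2 : ℝ) • y = -v
  · rw [hz', norm_neg]
  exact (hv.2.2 _ ⟨y, hy, rfl⟩ hz hz').le

lemma norm_le_two_mul_infDist_of_mem_voronoiRelevant {v : E} (hv : v ∈ voronoiRelevant L) :
    ‖v‖ ≤ 2 * infDist ((2⁻¹ : ℝ) • v) L := by
  rw [← div_le_iff₀' two_pos, le_infDist ⟨0, L.zero_mem⟩]
  intro y hy
  have hdist : dist ((2⁻¹ : ℝ) • v) y = ‖v + (2 : ℝ) • -y‖ / 2 := by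
    rw [dist_eq_norm, show (2⁻¹ : ℝ) • v - y = (2⁻¹ : ℝ) • (v + (2 : ℝ) • -y) by module,
      norm_smul, Real.norm_of_nonneg (by norm_num), inv_mul_eq_div]
  rw [hdist]
  gcongr
  exact norm_le_norm_add_two_smul_of_mem_voronoiRelevant hv (L.neg_mem hy)

lemma exists_add_eq_of_notMem_voronoiRelevant [StrictConvexSpace ℝ E] {x : E} (hx : x ∈ L)
    (hx0 : x ≠ 0) (hxL : x ∉ voronoiRelevant L) :
    ∃ a ∈ L, ∃ b ∈ L, ‖a‖ < ‖x‖ ∧ ‖b‖ < ‖x‖ ∧ a + b = x := by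
  have hshorter : ¬∀ z, (∃ w ∈ L, z = x + (2 : ℝ) • w) → z ≠ x → z ≠ -x → ‖x‖ < ‖z‖ :=
    fun h => hxL ⟨hx, hx0, h⟩
  push Not at hshorter
  obtain ⟨_, ⟨w, hw, rfl⟩, hux, hunx, hle⟩ := hshorter
  have half : (0 : ℝ) < 1 / 2 := by norm_num
  refine ⟨x + w, L.add_mem hx hw, -w, L.neg_mem hw, ?_, ?_, by abel⟩
  · convert norm_combo_lt_of_ne le_rfl hle (Ne.symm hux) half half (by norm_num) using 2
    module
  · convert norm_combo_lt_of_ne le_rfl ((norm_neg _).trans_le hle) ?_ half half (by norm_num)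
      using 2
    · module
    · exact fun h => hunx (neg_eq_iff_eq_neg.mp h.symm)

variable [ProperSpace E] [StrictConvexSpace ℝ E] [DiscreteTopology L]

lemma mem_span_voronoiRelevant {x : E} (hx : x ∈ L) :
    x ∈ Submodule.span ℝ (voronoiRelevant L) := by
  by_contra hxS
  obtain ⟨x₀, ⟨⟨hx₀L, hx₀x⟩, hx₀S⟩, hmin⟩ := Set.exists_min_image
    {y | y ∈ (L : Set E) ∩ closedBall 0 ‖x‖ ∧ y ∉ Submodule.span ℝ (voronoiRelevant L)}
    norm ((L.finite_inter_closedBall ‖x‖).subset fun _ h => h.1)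
    ⟨x, ⟨hx, mem_closedBall_zero_iff.2 le_rfl⟩, hxS⟩
  have hshort : ∀ y ∈ L, ‖y‖ < ‖x₀‖ → y ∈ Submodule.span ℝ (voronoiRelevant L) := by
    intro y hy hlt
    by_contra hyS
    have hyx : ‖y‖ ≤ ‖x‖ := hlt.le.trans (mem_closedBall_zero_iff.1 hx₀x)
    exact hlt.not_ge (hmin y ⟨⟨hy, mem_closedBall_zero_iff.2 hyx⟩, hyS⟩)
  have hx₀0 : x₀ ≠ 0 := fun h => hx₀S (h ▸ Submodule.zero_mem _)
  have hx₀VR : x₀ ∉ voronoiRelevant L := fun h => hx₀S (Submodule.subset_span h)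
  obtain ⟨a, ha, b, hb, hax, hbx, rfl⟩ :=
    exists_add_eq_of_notMem_voronoiRelevant hx₀L hx₀0 hx₀VR
  exact hx₀S (add_mem (hshort a ha hax) (hshort b hb hbx))

lemma span_voronoiRelevant_eq_top [IsZLattice ℝ L] :
    Submodule.span ℝ (voronoiRelevant L) = ⊤ :=
  top_le_iff.1 <| IsZLattice.span_top (K := ℝ) (L := L) ▸
    Submodule.span_le.2 fun _ hx => mem_span_voronoiRelevant hx

end VoronoiRelevant

lemma exists_mem_voronoiRelevant_infDist_le {E : Type*} [NormedAddCommGroup E]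
    [InnerProductSpace ℝ E] [FiniteDimensional ℝ E] [Nontrivial E] (L : Submodule ℤ E)
    [DiscreteTopology L] [IsZLattice ℝ L] :
    ∃ v ∈ voronoiRelevant L, ∀ t, infDist t (L : Set E) ≤ √(finrank ℝ E) * ‖v‖ / 2 := by
  classical
  obtain ⟨B, hBVR, hBspan, hBli⟩ := exists_linearIndependent ℝ (voronoiRelevant L)
  set S := hBli.setFinite.toFinset
  have hSB : (S : Set E) = B := hBli.setFinite.coe_toFinset
  rw [span_voronoiRelevant_eq_top, ← hSB] at hBspan
  have hSne : S.Nonempty := by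
    rw [Finset.nonempty_iff_ne_empty]
    rintro hS
    rw [hS, Finset.coe_empty, Submodule.span_empty] at hBspan
    exact bot_ne_top hBspan
  obtain ⟨v, hvS, hvmax⟩ := S.exists_max_image norm hSne
  have hcard : S.card ≤ finrank ℝ E :=
    LinearIndependent.finset_card_le_finrank (hSB ▸ hBli :)
  have hsum : ∑ w ∈ S, ‖w‖ ^ 2 ≤ finrank ℝ E * ‖v‖ ^ 2 :=
    calc ∑ w ∈ S, ‖w‖ ^ 2 ≤ S.card • ‖v‖ ^ 2 :=
          S.sum_le_card_nsmul _ _ fun w hw => pow_le_pow_left₀ (norm_nonneg _) (hvmax w hw) 2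
      _ ≤ finrank ℝ E * ‖v‖ ^ 2 := by rw [nsmul_eq_mul]; gcongr
  refine ⟨v, hBVR (hSB ▸ hvS), fun t => ?_⟩
  calc infDist t (L : Set E) ≤ √(∑ w ∈ S, ‖w‖ ^ 2) / 2 :=
        infDist_le_sqrt_sum_norm_sq_div_two (hSB ▸ hBVR.trans voronoiRelevant_subset) hBspan t
    _ ≤ √(finrank ℝ E * ‖v‖ ^ 2) / 2 := by gcongr
    _ = √(finrank ℝ E) * ‖v‖ / 2 := by
      rw [Real.sqrt_mul (by positivity), Real.sqrt_sq (norm_nonneg _)]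

/-- Every Voronoi relevant vector `v` of a full-rank lattice `L ⊆ ℝⁿ` satisfies
`‖v‖ ≤ 2μ(L)`, and some Voronoi relevant vector has `‖v‖ ≥ 2μ(L)/√n`.
Voronoi relevant vectors are characterized (Voronoi's theorem) as the nonzero `v ∈ L`
such that `±v` are the unique minimizers of the norm over `v + 2L`. -/
theorem voronoi_relevant_norm_bounds
    (n : ℕ) (hn : 1 ≤ n) (L : Submodule ℤ (EuclideanSpace ℝ (Fin n)))
    [DiscreteTopology L] [IsZLattice ℝ L]
    (VR : Set (EuclideanSpace ℝ (Fin n)))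
    (hVR : VR = {v | v ∈ L ∧ v ≠ 0 ∧
      ∀ z, (∃ w ∈ L, z = v + (2 : ℝ) • w) → z ≠ v → z ≠ -v → ‖v‖ < ‖z‖})
    (mu : ℝ)
    (hmu : mu = ⨆ t : EuclideanSpace ℝ (Fin n), sInf {r | ∃ y ∈ L, ‖t - y‖ = r}) :
    (∀ v ∈ VR, ‖v‖ ≤ 2 * mu) ∧ (∃ v ∈ VR, 2 * mu / Real.sqrt n ≤ ‖v‖) := by
  change VR = voronoiRelevant L at hVR
  simp only [← SetLike.mem_coe, sInf_setOf_norm_sub_eq_infDist] at hmu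
  have : Nonempty (Fin n) := ⟨⟨0, hn⟩⟩
  obtain ⟨v₀, hv₀, hcov⟩ := exists_mem_voronoiRelevant_infDist_le L
  rw [finrank_euclideanSpace_fin] at hcov
  have hbdd : BddAbove (Set.range fun t => infDist t (L : Set (EuclideanSpace ℝ (Fin n)))) :=
    ⟨√n * ‖v₀‖ / 2, Set.forall_mem_range.2 hcov⟩
  have hle_mu : ∀ t, infDist t (L : Set _) ≤ mu := fun t => hmu ▸ le_ciSup hbdd t
  have hmu_le : mu ≤ √n * ‖v₀‖ / 2 := hmu ▸ ciSup_le hcov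
  rw [hVR]
  refine ⟨fun v hv => ?_, v₀, hv₀, ?_⟩
  · calc ‖v‖ ≤ 2 * infDist ((2⁻¹ : ℝ) • v) (L : Set _) :=
          norm_le_two_mul_infDist_of_mem_voronoiRelevant hv
      _ ≤ 2 * mu := by linarith [hle_mu ((2⁻¹ : ℝ) • v)]
  · rw [div_le_iff₀ (Real.sqrt_pos.2 (by exact_mod_cast hn))]
    linarith
end
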